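/- Let φ be an order automorphism of (E, E₊) and suppose a, b, c, d are integers such that φ(r, x, y) = (5r, ax + by, cx + dy) for all (r, x, y) ∈ E. Then the matrix (a b; c d) is congruent modulo 9 to one of the three matrices (5 0; 0 2), (5 0; 3 2), (5 0; 6 2). -/

import Mathlib

/-!
Since `√3` is irrational and `5 ^ 6 ≡ 1 [ZMOD 9]`, a triple `(j + k√3, x, y)` lies in `E` exactly
when `x ≡ j [ZMOD 9]` and `y ≡ k [ZMOD 3]`. Applying `φ` to `(1, 1, 0)` and `(√3, 0, 1)` gives
`a ≡ 5`, `b ≡ 0 (mod 9)` and `c ≡ 0`, `d ≡ 2 (mod 3)`. The slice `r = 0` of `E` is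
`{0} × 9ℤ × 3ℤ`, and `φ` maps it onto itself, so `(a b; c d)` has determinant `±1`.
As `ad - bc ≡ 5d (mod 9)`, this forces `d ≡ ±2 (mod 9)`, hence `d ≡ 2 (mod 9)`.
-/

/-- The additive subgroup `E` of `ℝ × ℤ × ℤ`: all triples `(r, x, y)` such that
`r = (j + k√3)/5^(6i)`, `x ≡ j (mod 9)` and `y ≡ k (mod 3)` for some integers `i, j, k`. -/
def Eset : Set (ℝ × ℤ × ℤ) :=
  {p | ∃ i j k : ℤ, p.1 = ((j : ℝ) + (k : ℝ) * Real.sqrt 3) / (5 : ℝ) ^ (6 * i) ∧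
    p.2.1 ≡ j [ZMOD 9] ∧ p.2.2 ≡ k [ZMOD 3]}

/-- The positive cone `E₊ = {(r, x, y) ∈ E : r > 0} ∪ {(0, 0, 0)}`. -/
def Epos : Set (ℝ × ℤ × ℤ) :=
  {p | p ∈ Eset ∧ 0 < p.1} ∪ {0}

/-- An order automorphism of `(E, E₊)`: an additive group automorphism of `E`
(a bijection of `E` onto itself which is additive on `E`) with `φ(E₊) = E₊`. -/
structure IsOrderAuto (φ : ℝ × ℤ × ℤ → ℝ × ℤ × ℤ) : Prop where
  bijOn : Set.BijOn φ Eset Eset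
  addOn : ∀ p ∈ Eset, ∀ q ∈ Eset, φ (p + q) = φ p + φ q
  posEq : φ '' Epos = Epos

theorem Irrational.int_add_int_mul_inj {s : ℝ} (hs : Irrational s) {j k j' k' : ℤ}
    (h : (j : ℝ) + k * s = j' + k' * s) : j = j' ∧ k = k' := by
  have hk : k = k' := by
    by_contra hk
    have hk' : ((k - k' : ℤ) : ℝ) ≠ 0 := by exact_mod_cast sub_ne_zero.mpr hk
    refine hs.ne_rational (j' - j) (k - k') ?_
    field_simp
    push_cast
    linarith
  subst hk
  exact ⟨by exact_mod_cast add_right_cancel h, rfl⟩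

theorem five_pow_six_mul_modEq (n : ℕ) (j : ℤ) : 5 ^ (6 * n) * j ≡ j [ZMOD 9] := by
  have h : (5 : ℤ) ^ (6 * n) ≡ 1 [ZMOD 9] := by
    simpa [pow_mul] using (show (5 : ℤ) ^ 6 ≡ 1 [ZMOD 9] by decide).pow n
  simpa using h.mul_right j

theorem modEq_of_add_mul_sqrt_three_eq {j k j' k' : ℤ} (n : ℕ)
    (h : (j' : ℝ) + k' * √3 = 5 ^ (6 * n) * (j + k * √3)) :
    j' ≡ j [ZMOD 9] ∧ k' ≡ k [ZMOD 9] := by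
  have h' : (j' : ℝ) + k' * √3 =
      ((5 ^ (6 * n) * j : ℤ) : ℝ) + ((5 ^ (6 * n) * k : ℤ) : ℝ) * √3 := by
    rw [h]; push_cast; ring
  obtain ⟨rfl, rfl⟩ :=
    (Nat.Prime.irrational_sqrt (p := 3) (by norm_num)).int_add_int_mul_inj (by exact_mod_cast h')
  exact ⟨five_pow_six_mul_modEq n j, five_pow_six_mul_modEq n k⟩

theorem mem_Eset_iff {p : ℝ × ℤ × ℤ} {j k : ℤ} (hp : p.1 = j + k * √3) :
    p ∈ Eset ↔ p.2.1 ≡ j [ZMOD 9] ∧ p.2.2 ≡ k [ZMOD 3] := by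
  refine ⟨fun ⟨i, j', k', hp', hx, hy⟩ => ?_,
    fun ⟨hx, hy⟩ => ⟨0, j, k, by simpa using hp, hx, hy⟩⟩
  rw [hp] at hp'
  obtain ⟨n, rfl | rfl⟩ := Int.eq_nat_or_neg i
  · have h : (j' : ℝ) + k' * √3 = 5 ^ (6 * n) * (j + k * √3) := by
      rw [hp', show (5 : ℝ) ^ (6 * (n : ℤ)) = 5 ^ (6 * n) by norm_cast]; field_simp
    obtain ⟨hj, hk⟩ := modEq_of_add_mul_sqrt_three_eq n h
    exact ⟨hx.trans hj, hy.trans (hk.of_dvd (by norm_num))⟩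
  · have h : (j : ℝ) + k * √3 = 5 ^ (6 * n) * (j' + k' * √3) := by
      rw [hp', mul_neg, zpow_neg, div_inv_eq_mul, mul_comm]; norm_cast
    obtain ⟨hj, hk⟩ := modEq_of_add_mul_sqrt_three_eq n h
    exact ⟨hx.trans hj.symm, hy.trans (hk.symm.of_dvd (by norm_num))⟩

theorem mem_Eset_iff_of_fst_eq_zero {p : ℝ × ℤ × ℤ} (hp : p.1 = 0) :
    p ∈ Eset ↔ 9 ∣ p.2.1 ∧ 3 ∣ p.2.2 := by
  rw [mem_Eset_iff (j := 0) (k := 0) (by simp [hp])]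
  simp only [Int.modEq_zero_iff_dvd]

-- With `M = (a b; c d)` and `N = (x x'; y y')` the hypotheses say `M * N = diag(m, n)`,
-- while `m * n ∣ det N`.
theorem isUnit_det_of_mul_eq_diag {m n a b c d x y x' y' : ℤ} (hm : m ≠ 0) (hn : n ≠ 0)
    (hx : m ∣ x) (hy : n ∣ y) (hx' : m ∣ x') (hy' : n ∣ y')
    (h₁ : a * x + b * y = m) (h₂ : c * x + d * y = 0)
    (h₃ : a * x' + b * y' = 0) (h₄ : c * x' + d * y' = n) : IsUnit (a * d - b * c) := by
  obtain ⟨u, rfl⟩ := hx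
  obtain ⟨v, rfl⟩ := hy
  obtain ⟨u', rfl⟩ := hx'
  obtain ⟨v', rfl⟩ := hy'
  have h : m * n * ((a * d - b * c) * (u * v' - u' * v)) = m * n * 1 := by
    linear_combination (c * (m * u') + d * (n * v')) * h₁ + m * h₄
      - (a * (m * u') + b * (n * v')) * h₂
  exact .of_mul_eq_one _ (mul_left_cancel₀ (mul_ne_zero hm hn) h)

/-- If `φ` is an order automorphism of `(E, E₊)` with `φ(r, x, y) = (5r, ax + by, cx + dy)`
on `E`, then the matrix `(a b; c d)` is congruent mod 9 to one of
`(5 0; 0 2)`, `(5 0; 3 2)`, `(5 0; 6 2)`. -/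
theorem stmt_12 (φ : ℝ × ℤ × ℤ → ℝ × ℤ × ℤ) (hφ : IsOrderAuto φ) (a b c d : ℤ)
    (h : ∀ p ∈ Eset, φ p = (5 * p.1, a * p.2.1 + b * p.2.2, c * p.2.1 + d * p.2.2)) :
    (a ≡ 5 [ZMOD 9] ∧ b ≡ 0 [ZMOD 9] ∧ c ≡ 0 [ZMOD 9] ∧ d ≡ 2 [ZMOD 9]) ∨
    (a ≡ 5 [ZMOD 9] ∧ b ≡ 0 [ZMOD 9] ∧ c ≡ 3 [ZMOD 9] ∧ d ≡ 2 [ZMOD 9]) ∨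
    (a ≡ 5 [ZMOD 9] ∧ b ≡ 0 [ZMOD 9] ∧ c ≡ 6 [ZMOD 9] ∧ d ≡ 2 [ZMOD 9]) := by
  have himage : ∀ {p}, p ∈ Eset →
      (5 * p.1, a * p.2.1 + b * p.2.2, c * p.2.1 + d * p.2.2) ∈ Eset :=
    fun hp => h _ hp ▸ hφ.bijOn.mapsTo hp
  have hpreimage : ∀ {x y : ℤ}, ((0 : ℝ), x, y) ∈ Eset →
      ∃ x' y', 9 ∣ x' ∧ 3 ∣ y' ∧ a * x' + b * y' = x ∧ c * x' + d * y' = y := by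
    intro x y ht
    obtain ⟨q, hq, hφq⟩ := hφ.bijOn.surjOn ht
    simp only [h q hq, Prod.mk.injEq, mul_eq_zero, OfNat.ofNat_ne_zero, false_or] at hφq
    obtain ⟨hq0, hx, hy⟩ := hφq
    obtain ⟨hx₉, hy₃⟩ := (mem_Eset_iff_of_fst_eq_zero hq0).mp hq
    exact ⟨_, _, hx₉, hy₃, hx, hy⟩
  have h₁₁₀ : ((1 : ℝ), (1 : ℤ), (0 : ℤ)) ∈ Eset :=
    (mem_Eset_iff (j := 1) (k := 0) (by simp)).mpr ⟨rfl, rfl⟩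
  have h₀₀₁ : (√3, (0 : ℤ), (1 : ℤ)) ∈ Eset :=
    (mem_Eset_iff (j := 0) (k := 1) (by simp)).mpr ⟨rfl, rfl⟩
  obtain ⟨ha, hc⟩ := (mem_Eset_iff (j := 5) (k := 0) (by simp)).mp (himage h₁₁₀)
  obtain ⟨hb, hd⟩ := (mem_Eset_iff (j := 0) (k := 5) (by simp)).mp (himage h₀₀₁)
  simp only [mul_one, mul_zero, add_zero, zero_add] at ha hb hc hd
  obtain ⟨x, y, hx, hy, h₁, h₂⟩ :=
    hpreimage ((mem_Eset_iff_of_fst_eq_zero rfl).mpr ⟨dvd_refl 9, dvd_zero 3⟩)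
  obtain ⟨x', y', hx', hy', h₃, h₄⟩ :=
    hpreimage ((mem_Eset_iff_of_fst_eq_zero rfl).mpr ⟨dvd_zero 9, dvd_refl 3⟩)
  have hdet := Int.isUnit_iff.mp
    (isUnit_det_of_mul_eq_diag (by norm_num) (by norm_num) hx hy hx' hy' h₁ h₂ h₃ h₄)
  have hdet_mod : a * d - b * c ≡ 5 * d - 0 * c [ZMOD 9] :=
    (ha.mul_right d).sub (hb.mul_right c)
  simp only [Int.ModEq] at *
  omega
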